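/- For every t ≥ 0 and every w ∈ W, ∫_{−∞}^{0} e^{yD*}((D + D*)(e^{(y−t)D} w)) dy = e^{−tD} w. (This is the compression relation Φ* ∘ S_t ∘ Φ = e^{−tD} for the right-translation group S_t f = f(· − t) on L²(ℝ; W) and the map Φ of the explicit dilation.) -/

import Mathlib

/-!
Put `f y = e^{yD*} e^{(y-t)D} w`; by the product rule `f'` is the integrand, and `f 0 = e^{-tD} w`.
In finite dimension the positivity hypothesis is coercivity, `⟪D v, v⟫ ≥ c ‖v‖²` with `c > 0`,
and the same holds for `D*`. Then `y ↦ e^{-2cy} ‖e^{yA} v‖²` is monotone for `A ∈ {D, D*}`, so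
`‖e^{yA} v‖ ≤ e^{cy} ‖v‖` for `y ≤ 0`. Hence `f` and `f'` decay exponentially at `-∞`, and
the fundamental theorem of calculus on `(-∞, 0]` gives `∫ f' = f 0`.
-/

open MeasureTheory RealInnerProductSpace

theorem exists_pos_mul_norm_sq_le_inner_self {V : Type*} [NormedAddCommGroup V]
    [InnerProductSpace ℝ V] [FiniteDimensional ℝ V] (T : V →L[ℝ] V)
    (hT : ∀ v, v ≠ 0 → 0 < ⟪T v, v⟫) : ∃ c > 0, ∀ v, c * ‖v‖ ^ 2 ≤ ⟪T v, v⟫ := by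
  rcases subsingleton_or_nontrivial V with hV | hV
  · exact ⟨1, one_pos, fun v => by simp [Subsingleton.elim v 0]⟩
  obtain ⟨u₀, hu₀, hmin⟩ := (isCompact_sphere (0 : V) 1).exists_isMinOn
    (NormedSpace.sphere_nonempty.2 zero_le_one)
    (T.continuous.inner (𝕜 := ℝ) continuous_id).continuousOn
  refine ⟨⟪T u₀, u₀⟫, hT u₀ (ne_zero_of_mem_unit_sphere ⟨u₀, hu₀⟩), fun v => ?_⟩
  rcases eq_or_ne v 0 with rfl | hv
  · simp
  have hnorm : ‖v‖ ≠ 0 := norm_ne_zero_iff.2 hv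
  have hu : ‖v‖⁻¹ • v ∈ Metric.sphere (0 : V) 1 := by
    simp [norm_smul, hnorm]
  have hv_eq : v = ‖v‖ • ‖v‖⁻¹ • v := by rw [smul_smul, mul_inv_cancel₀ hnorm, one_smul]
  calc ⟪T u₀, u₀⟫ * ‖v‖ ^ 2 ≤ ‖v‖ ^ 2 * ⟪T (‖v‖⁻¹ • v), ‖v‖⁻¹ • v⟫ := by
        rw [mul_comm]; exact mul_le_mul_of_nonneg_left (hmin hu) (sq_nonneg _)
    _ = ⟪T v, v⟫ := by
        conv_rhs => rw [hv_eq]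
        simp only [map_smul, inner_smul_left, inner_smul_right, RCLike.conj_to_real]
        ring

theorem monotone_exp_neg_mul_mul_of_mul_le_deriv {g g' : ℝ → ℝ} {k : ℝ}
    (hg : ∀ s, HasDerivAt g (g' s) s) (hk : ∀ s, k * g s ≤ g' s) :
    Monotone fun s => Real.exp (-k * s) * g s := by
  have hderiv : ∀ s, HasDerivAt (fun s => Real.exp (-k * s) * g s)
      (Real.exp (-k * s) * (g' s - k * g s)) s := fun s => by
    refine ((((hasDerivAt_id' s).const_mul (-k)).exp).mul (hg s)).congr_deriv ?_
    ring
  refine monotone_of_deriv_nonneg (fun s => (hderiv s).differentiableAt) fun s => ?_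
  rw [(hderiv s).deriv]
  exact mul_nonneg (Real.exp_pos _).le (sub_nonneg.2 (hk s))

section ExpApply

variable {E : Type*} [NormedAddCommGroup E] [NormedSpace ℝ E] [CompleteSpace E]

theorem hasDerivAt_exp_smul_apply (A : E →L[ℝ] E) (v : E) (s : ℝ) :
    HasDerivAt (fun s : ℝ => NormedSpace.exp (s • A) v) (A (NormedSpace.exp (s • A) v)) s := by
  simpa using (hasDerivAt_exp_smul_const' A s).clm_apply (hasDerivAt_const s v)

theorem hasDerivAt_exp_smul_apply_exp_sub_smul_apply (A B : E →L[ℝ] E) (t : ℝ) (w : E)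
    (y : ℝ) :
    HasDerivAt (fun y : ℝ => NormedSpace.exp (y • A) (NormedSpace.exp ((y - t) • B) w))
      (NormedSpace.exp (y • A) ((B + A) (NormedSpace.exp ((y - t) • B) w))) y := by
  have hB := (hasDerivAt_exp_smul_apply B w (y - t)).comp_sub_const y t
  refine ((hasDerivAt_exp_smul_const A y).clm_apply hB).congr_deriv ?_
  rw [mul_apply_eq_comp, add_apply, map_add, add_comm]

theorem integral_Iic_of_hasDerivAt_of_norm_le_exp {f f' : ℝ → E} {a c C C' : ℝ} (hc : 0 < c)
    (hderiv : ∀ y, HasDerivAt f (f' y) y) (hf : ∀ y ≤ a, ‖f y‖ ≤ Real.exp (c * y) * C)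
    (hf' : ∀ y ≤ a, ‖f' y‖ ≤ Real.exp (c * y) * C') :
    ∫ y in Set.Iic a, f' y = f a := by
  have hf'_meas : AEStronglyMeasurable f' (volume.restrict (Set.Iic a)) := by
    rw [show f' = deriv f from funext fun y => (hderiv y).deriv.symm]
    exact aestronglyMeasurable_deriv f _
  have hint : IntegrableOn f' (Set.Iic a) :=
    ((integrableOn_exp_mul_Iic hc a).mul_const C').mono' hf'_meas
      ((ae_restrict_iff' measurableSet_Iic).2 (ae_of_all _ hf'))
  have hlim : Filter.Tendsto f Filter.atBot (nhds 0) := by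
    refine squeeze_zero_norm' ?_ (by simpa using
      (Real.tendsto_exp_atBot.comp (Filter.tendsto_id.const_mul_atBot hc)).mul_const C)
    filter_upwards [Filter.Iic_mem_atBot a] with y hy using hf y hy
  rw [integral_Iic_of_hasDerivAt_of_tendsto' (fun y _ => hderiv y) hint hlim, sub_zero]

end ExpApply

section Adjoint

variable {V : Type*} [NormedAddCommGroup V] [InnerProductSpace ℝ V] [CompleteSpace V]

theorem inner_adjoint_apply_self (A : V →L[ℝ] V) (v : V) :
    ⟪ContinuousLinearMap.adjoint A v, v⟫ = ⟪A v, v⟫ := by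
  rw [ContinuousLinearMap.adjoint_inner_left, real_inner_comm]

theorem inner_add_adjoint_apply_self (A : V →L[ℝ] V) (v : V) :
    ⟪(A + ContinuousLinearMap.adjoint A) v, v⟫ = 2 * ⟪A v, v⟫ := by
  rw [add_apply, inner_add_left, inner_adjoint_apply_self, two_mul]

theorem norm_exp_smul_apply_le_of_nonpos (A : V →L[ℝ] V) {c : ℝ}
    (hA : ∀ v, c * ‖v‖ ^ 2 ≤ ⟪A v, v⟫) (v : V) {y : ℝ} (hy : y ≤ 0) :
    ‖NormedSpace.exp (y • A) v‖ ≤ Real.exp (c * y) * ‖v‖ := by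
  set u : ℝ → V := fun s => NormedSpace.exp (s • A) v
  have hu := fun s => (hasDerivAt_exp_smul_apply A v s).norm_sq
  have hmono := monotone_exp_neg_mul_mul_of_mul_le_deriv (k := 2 * c) hu fun s => by
    rw [real_inner_comm, mul_assoc]
    exact mul_le_mul_of_nonneg_left (hA (u s)) zero_le_two
  have hsq : ‖u y‖ ^ 2 ≤ (Real.exp (c * y) * ‖v‖) ^ 2 := by
    have hdecay := hmono hy
    simp only [mul_zero, Real.exp_zero, zero_smul, NormedSpace.exp_zero, one_mul,
      one_apply_eq_self] at hdecay
    have hexp : Real.exp (c * y) ^ 2 * Real.exp (-(2 * c) * y) = 1 := by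
      rw [← Real.exp_nat_mul, ← Real.exp_add]; ring_nf; exact Real.exp_zero
    calc ‖u y‖ ^ 2 = Real.exp (c * y) ^ 2 * (Real.exp (-(2 * c) * y) * ‖u y‖ ^ 2) := by
          rw [← mul_assoc, hexp, one_mul]
      _ ≤ (Real.exp (c * y) * ‖v‖) ^ 2 := by
          rw [mul_pow]; exact mul_le_mul_of_nonneg_left hdecay (by positivity)
  exact (pow_le_pow_iff_left₀ (norm_nonneg _) (by positivity) two_ne_zero).1 hsq

end Adjoint

/-- Let `W` be a finite-dimensional real inner product space and
`D : W → W` a linear map with adjoint `D*` such that `⟨(D + D*)w, w⟩ > 0` for every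
nonzero `w`.  For every `t ≥ 0` and every `w ∈ W`,
`∫_{−∞}^{0} e^{yD*}((D + D*)(e^{(y−t)D} w)) dy = e^{−tD} w`
(the compression relation `Φ* ∘ S_t ∘ Φ = e^{−tD}` for the right-translation
group on `L²(ℝ; W)`). -/
theorem compression_relation_nonneg_time
    {W : Type*} [NormedAddCommGroup W] [InnerProductSpace ℝ W] [FiniteDimensional ℝ W]
    (D : W →L[ℝ] W)
    (hpos : ∀ w : W, w ≠ 0 → 0 < ⟪(D + ContinuousLinearMap.adjoint D) w, w⟫) :
    ∀ t : ℝ, 0 ≤ t → ∀ w : W,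
      ∫ y in Set.Iic (0 : ℝ),
        NormedSpace.exp (y • ContinuousLinearMap.adjoint D)
          ((D + ContinuousLinearMap.adjoint D) (NormedSpace.exp ((y - t) • D) w))
        = NormedSpace.exp ((-t) • D) w := by
  intro t ht w
  set Dstar := ContinuousLinearMap.adjoint D
  obtain ⟨c, hc, hD⟩ := exists_pos_mul_norm_sq_le_inner_self D fun v hv =>
    pos_of_mul_pos_right (inner_add_adjoint_apply_self D v ▸ hpos v hv) zero_le_two
  have hDstar : ∀ v, c * ‖v‖ ^ 2 ≤ ⟪Dstar v, v⟫ := by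
    simpa only [Dstar, inner_adjoint_apply_self] using hD
  have hright : ∀ y ≤ 0, ‖NormedSpace.exp ((y - t) • D) w‖ ≤ ‖w‖ := fun y hy =>
    (norm_exp_smul_apply_le_of_nonpos D hD w (by linarith)).trans
      (mul_le_of_le_one_left (norm_nonneg w) (Real.exp_le_one_iff.2 (by nlinarith)))
  have hf : ∀ y ≤ 0, ‖NormedSpace.exp (y • Dstar) (NormedSpace.exp ((y - t) • D) w)‖
      ≤ Real.exp (c * y) * ‖w‖ := fun y hy =>
    (norm_exp_smul_apply_le_of_nonpos Dstar hDstar _ hy).trans (by gcongr; exact hright y hy)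
  have hf' : ∀ y ≤ 0,
      ‖NormedSpace.exp (y • Dstar) ((D + Dstar) (NormedSpace.exp ((y - t) • D) w))‖
      ≤ Real.exp (c * y) * (‖D + Dstar‖ * ‖w‖) := fun y hy =>
    (norm_exp_smul_apply_le_of_nonpos Dstar hDstar _ hy).trans
      (by gcongr; exact (D + Dstar).le_opNorm_of_le (hright y hy))
  rw [integral_Iic_of_hasDerivAt_of_norm_le_exp hc
    (hasDerivAt_exp_smul_apply_exp_sub_smul_apply Dstar D t w) hf hf']
  simp only [zero_smul, NormedSpace.exp_zero, one_apply_eq_self, zero_sub]
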